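/- Let K be a compact subset of ℝ of infinite cardinality. For n ≥ 1 let m_n(K) denote the infimum of ‖P‖_K over all monic real polynomials P of degree n. Then the sequence (m_n(K)^{1/n})_{n ≥ 1} converges. -/

import Mathlib

/-! Multiplying monic polynomials of degrees `a` and `b` gives a monic polynomial of degree
`a + b`, and the sup norm on `K` is submultiplicative, so `m_{a+b}(K) ≤ m_a(K) m_b(K)`.
The multiplicative form of Fekete's lemma then shows that `m_n(K)^{1/n}` converges to
`inf_{n ≥ 1} m_n(K)^{1/n}`. -/

open Polynomial Filter

/-- The sup norm of a real polynomial on a set `K ⊆ ℝ`. -/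
noncomputable def supNormOn (K : Set ℝ) (P : Polynomial ℝ) : ℝ :=
  sSup ((fun x => |P.eval x|) '' K)

/-- `m_n(K)`: the infimum of sup norms on `K` of monic real polynomials of degree `n`. -/
noncomputable def chebInf (K : Set ℝ) (n : ℕ) : ℝ :=
  sInf (supNormOn K '' {P : Polynomial ℝ | P.Monic ∧ P.natDegree = n})

open Topology

section Submultiplicative

variable {u : ℕ → ℝ}

theorem pow_mul_add_le_of_submultiplicative (hu0 : ∀ n, 0 ≤ u n)
    (hu : ∀ m n, u (m + n) ≤ u m * u n) (k q r : ℕ) :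
    u (k * q + r) ≤ u k ^ q * u r := by
  induction q with
  | zero => simp
  | succ q ih =>
    calc u (k * (q + 1) + r) = u (k + (k * q + r)) := by ring_nf
      _ ≤ u k * u (k * q + r) := hu _ _
      _ ≤ u k * (u k ^ q * u r) := mul_le_mul_of_nonneg_left ih (hu0 k)
      _ = u k ^ (q + 1) * u r := by ring

theorem eventually_lt_pow_of_submultiplicative (hu0 : ∀ n, 0 ≤ u n)
    (hu : ∀ m n, u (m + n) ≤ u m * u n) {k : ℕ} (hk : k ≠ 0) {L : ℝ} (hL : 0 < L)
    (hkL : u k < L ^ k) : ∀ᶠ n in atTop, u n < L ^ n := by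
  refine .atTop_of_arithmetic hk fun r _ => ?_
  have hρ : Tendsto (fun q : ℕ => (u k / L ^ k) ^ q * u r) atTop (𝓝 0) := by
    simpa using (tendsto_pow_atTop_nhds_zero_of_lt_one (div_nonneg (hu0 k) (by positivity))
      ((div_lt_one (by positivity)).2 hkL)).mul_const (u r)
  filter_upwards [hρ.eventually (gt_mem_nhds (pow_pos hL r))] with q hq
  calc u (k * q + r) ≤ u k ^ q * u r := pow_mul_add_le_of_submultiplicative hu0 hu k q r
    _ = (u k / L ^ k) ^ q * u r * L ^ (k * q) := by
      rw [div_pow, ← pow_mul]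
      field_simp
    _ < L ^ r * L ^ (k * q) := mul_lt_mul_of_pos_right hq (by positivity)
    _ = L ^ (k * q + r) := by rw [pow_add, mul_comm]

theorem tendsto_pow_inv_of_submultiplicative (hu0 : ∀ n, 0 ≤ u n)
    (hu : ∀ m n, u (m + n) ≤ u m * u n) :
    Tendsto (fun n : ℕ => u n ^ (n : ℝ)⁻¹) atTop
      (𝓝 (sInf ((fun n : ℕ => u n ^ (n : ℝ)⁻¹) '' Set.Ici 1))) := by
  set a := fun n : ℕ => u n ^ (n : ℝ)⁻¹
  have root_lt_iff {n : ℕ} (hn : n ≠ 0) {L : ℝ} (hL : 0 < L) : a n < L ↔ u n < L ^ n := by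
    rw [Real.rpow_inv_lt_iff_of_pos (hu0 n) hL.le (by positivity), Real.rpow_natCast]
  have hbdd : BddBelow (a '' Set.Ici 1) :=
    ⟨0, by rintro _ ⟨n, -, rfl⟩; exact Real.rpow_nonneg (hu0 n) _⟩
  refine tendsto_order.2 ⟨fun l hl => eventually_atTop.2
    ⟨1, fun n hn => hl.trans_le (csInf_le hbdd ⟨n, hn, rfl⟩)⟩, fun L hL => ?_⟩
  obtain ⟨_, ⟨k, hk, rfl⟩, hkL⟩ := exists_lt_of_csInf_lt (Set.nonempty_Ici.image a) hL
  have hk0 : k ≠ 0 := Nat.one_le_iff_ne_zero.1 hk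
  have hL0 : 0 < L := (Real.rpow_nonneg (hu0 k) _).trans_lt hkL
  filter_upwards [eventually_lt_pow_of_submultiplicative hu0 hu hk0 hL0
    ((root_lt_iff hk0 hL0).1 hkL), eventually_ne_atTop 0] with n hn hn0
  exact (root_lt_iff hn0 hL0).2 hn

end Submultiplicative

section SupNorm

variable {K : Set ℝ}

lemma supNormOn_nonneg (P : ℝ[X]) : 0 ≤ supNormOn K P :=
  Real.sSup_nonneg (by rintro _ ⟨x, -, rfl⟩; exact abs_nonneg _)

lemma abs_eval_le_supNormOn (hK : IsCompact K) (P : ℝ[X]) {x : ℝ} (hx : x ∈ K) :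
    |P.eval x| ≤ supNormOn K P :=
  le_csSup (hK.image P.continuous.abs).bddAbove ⟨x, hx, rfl⟩

lemma supNormOn_mul_le (hK : IsCompact K) (P Q : ℝ[X]) :
    supNormOn K (P * Q) ≤ supNormOn K P * supNormOn K Q := by
  refine Real.sSup_le ?_ (mul_nonneg (supNormOn_nonneg P) (supNormOn_nonneg Q))
  rintro _ ⟨x, hx, rfl⟩
  simp only [eval_mul, abs_mul]
  exact mul_le_mul (abs_eval_le_supNormOn hK P hx) (abs_eval_le_supNormOn hK Q hx)
    (abs_nonneg _) (supNormOn_nonneg P)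

lemma chebInf_nonneg (n : ℕ) : 0 ≤ chebInf K n :=
  Real.sInf_nonneg (by rintro _ ⟨P, -, rfl⟩; exact supNormOn_nonneg P)

lemma chebInf_le_supNormOn {P : ℝ[X]} (hP : P.Monic) : chebInf K P.natDegree ≤ supNormOn K P :=
  csInf_le ⟨0, by rintro _ ⟨Q, -, rfl⟩; exact supNormOn_nonneg Q⟩ ⟨P, ⟨hP, rfl⟩, rfl⟩

lemma chebInf_add_le (hK : IsCompact K) (a b : ℕ) :
    chebInf K (a + b) ≤ chebInf K a * chebInf K b := by
  have nonempty_monic (n : ℕ) : Nonempty {P : ℝ[X] | P.Monic ∧ P.natDegree = n} :=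
    ⟨⟨X ^ n, monic_X_pow n, natDegree_X_pow n⟩⟩
  show _ ≤ sInf _ * sInf _
  rw [sInf_image', sInf_image',
    Real.iInf_mul_of_nonneg (Real.iInf_nonneg fun Q => supNormOn_nonneg _)]
  refine le_ciInf fun ⟨P, hPm, hPa⟩ => ?_
  rw [Real.mul_iInf_of_nonneg (supNormOn_nonneg _)]
  refine le_ciInf fun ⟨Q, hQm, hQb⟩ => ?_
  calc chebInf K (a + b) = chebInf K (P * Q).natDegree := by
        rw [hPm.natDegree_mul hQm, hPa, hQb]
    _ ≤ supNormOn K (P * Q) := chebInf_le_supNormOn (hPm.mul hQm)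
    _ ≤ supNormOn K P * supNormOn K Q := supNormOn_mul_le hK P Q

end SupNorm

theorem chebInf_pow_inv_converges_general (K : Set ℝ) (hK : IsCompact K) :
    ∃ l : ℝ, Tendsto (fun n : ℕ => chebInf K n ^ ((n : ℝ)⁻¹)) atTop (nhds l) :=
  ⟨_, tendsto_pow_inv_of_submultiplicative chebInf_nonneg (chebInf_add_le hK)⟩

/-- The sequence `m_n(K)^(1/n)` converges. -/
theorem chebInf_pow_inv_converges (K : Set ℝ) (hK : IsCompact K) (hKinf : K.Infinite) :
    ∃ l : ℝ, Tendsto (fun n : ℕ => chebInf K n ^ ((n : ℝ)⁻¹)) atTop (nhds l) :=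
  chebInf_pow_inv_converges_general K hK
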